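/- Let R : Z_3^3 → S_5 satisfy: 1 ∈ {R(x)_1,R(x)_2,R(x)_3}, R(x)_5 ≠ 5, and d_H(R(x)_{\{4,5}}, R(y)_{\{4,5}}) ≥ d_H(x,y) for distinct x,y. Let S : Z_3^3 → S_5 satisfy: 2 ∈ {S(x)_1,S(x)_2,S(x)_3}, S(x)_5 ≠ 1, and d_H(S(x)_{\{4,5}}, S(y)_{\{4,5}}) ≥ d_H(x,y) for distinct x,y. Define U : Z_3^6 → S_8 by the paper's construction (set φ = R(x_1,x_2,x_3), γ = S(x_4,x_5,x_6)+(3,3,3,3,3); define ρ_i = γ_5 if 1≤i≤4 and φ_i=5, ρ_i = φ_i if 1≤i≤4 and φ_i≠5, ρ_i = φ_5 if 5≤i≤8 and γ_{i−4}=4, ρ_i = γ_{i−4} if 5≤i≤8 and γ_{i−4}≠4; then swap values 1↔7 and 5↔8 in ρ to get U(x)). Then for every x ∈ Z_3^6, U(x) is a permutation of {1,...,8}, 7 ∈ {U(x)_1,U(x)_2,U(x)_3}, 8 ∈ {U(x)_5,U(x)_6,U(x)_7}, and for distinct x,y ∈ Z_3^6, d_H(U(x)_{\{4,8}}, U(y)_{\{4,8}})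 ≥ d_H(x,y). -/

import Mathlib

/-- The left half of a length-6 ternary vector. -/
def xL (x : Fin 6 → Fin 3) : Fin 3 → Fin 3 := fun j => x ⟨j.val, by omega⟩

/-- The right half of a length-6 ternary vector. -/
def xR (x : Fin 6 → Fin 3) : Fin 3 → Fin 3 := fun j => x ⟨j.val + 3, by omega⟩

/-- φ = R(x₁,x₂,x₃), as a tuple with values in {1,…,5}. -/
def phi (R : (Fin 3 → Fin 3) → Equiv.Perm (Fin 5)) (x : Fin 6 → Fin 3) (i : Fin 5) : ℕ :=
  ((R (xL x) i : Fin 5) : ℕ) + 1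

/-- γ = S(x₄,x₅,x₆) + (3,3,3,3,3), as a tuple with values in {4,…,8}. -/
def gam (S : (Fin 3 → Fin 3) → Equiv.Perm (Fin 5)) (x : Fin 6 → Fin 3) (i : Fin 5) : ℕ :=
  ((S (xR x) i : Fin 5) : ℕ) + 1 + 3

/-- The intermediate tuple ρ of the paper's construction of U. -/
def rho (R S : (Fin 3 → Fin 3) → Equiv.Perm (Fin 5)) (x : Fin 6 → Fin 3) (i : Fin 8) : ℕ :=
  if h : i.val < 4 then
    (if phi R x ⟨i.val, by omega⟩ = 5 then gam S x 4 else phi R x ⟨i.val, by omega⟩)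
  else
    (if gam S x ⟨i.val - 4, by omega⟩ = 4 then phi R x 4 else gam S x ⟨i.val - 4, by omega⟩)

/-- Swapping the values 1 ↔ 7 and 5 ↔ 8. -/
def sw (v : ℕ) : ℕ :=
  if v = 1 then 7 else if v = 7 then 1 else if v = 5 then 8 else if v = 8 then 5 else v

/-- The map U of the paper, with values in {1,…,8}. -/
def Umap (R S : (Fin 3 → Fin 3) → Equiv.Perm (Fin 5)) (x : Fin 6 → Fin 3) (i : Fin 8) : ℕ :=
  sw (rho R S x i)

/-!
Since `R(x)₅ ≠ 5`, the value 5 of φ sits in one of its first four positions, where ρ replaces it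
by `γ₅ ∈ {5,…,8}`; symmetrically the value 4 of γ sits among its first four positions and is
replaced by `φ₅ ∈ {1,…,4}`. So the first half of ρ is injective with values `{1,…,4} \ {φ₅} ∪ {γ₅}`,
the second half with values `{5,…,8} \ {γ₅} ∪ {φ₅}`, and ρ is a permutation. Moreover ρᵢ is
obtained from φᵢ (resp. γᵢ₋₄) by a map that is injective on the relevant range, whatever the
replacement value, so a coordinate where φ or γ differ is one where ρ differs; the Hamming
distance on Z₃⁶ is the sum of the distances of the two halves. Finally the swap sends the value 1
of φ and the value 5 of γ, both among the first three positions of their halves, to 7 and 8.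
-/

open Function Finset

theorem Fin.card_filter_univ_add {m n : ℕ} (p : Fin (m + n) → Prop) [DecidablePred p] :
    #{i | p i} = #{i : Fin m | p (Fin.castAdd n i)} + #{j : Fin n | p (Fin.natAdd m j)} := by
  simp only [card_filter]
  exact Fin.sum_univ_add _

theorem Fin.card_filter_univ_castSucc {n : ℕ} (p : Fin (n + 1) → Prop) [DecidablePred p]
    (hp : ¬ p (Fin.last n)) : #{i | p i} = #{i : Fin n | p i.castSucc} := by
  simp only [card_filter, Fin.sum_univ_castSucc, hp, if_false, add_zero]

theorem hammingDist_fin_add {m n : ℕ} {β : Type*} [DecidableEq β] (x y : Fin (m + n) → β) :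
    hammingDist x y =
      hammingDist (x ∘ Fin.castAdd n) (y ∘ Fin.castAdd n) +
        hammingDist (x ∘ Fin.natAdd m) (y ∘ Fin.natAdd m) :=
  Fin.card_filter_univ_add _

theorem hammingDist_le_of_forall_ne {ι β : Type*} [Fintype ι] [DecidableEq β]
    {f : (ι → β) → (ι → β) → ℕ} (h : ∀ x y, x ≠ y → hammingDist x y ≤ f x y) (x y : ι → β) :
    hammingDist x y ≤ f x y := by
  rcases eq_or_ne x y with rfl | hxy
  · simp
  · exact h x y hxy

theorem Function.Injective.ite_replace {ι α : Type*} [DecidableEq α] {f : ι → α}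
    (hf : Injective f) {a c : α} (hc : ∀ i, f i ≠ a → f i ≠ c) :
    Injective fun i => if f i = a then c else f i := by
  intro i j h
  dsimp only at h
  split_ifs at h with hi hj hj
  · exact hf (hi.trans hj.symm)
  · exact absurd h.symm (hc j hj)
  · exact absurd h (hc i hi)
  · exact hf h

theorem sw_involutive : Involutive sw := by
  intro v
  unfold sw
  split_ifs <;> omega

theorem sw_mem_Icc {v : ℕ} (hv : v ∈ Icc 1 8) : sw v ∈ Icc 1 8 := by
  rw [mem_Icc] at hv ⊢
  unfold sw
  split_ifs <;> omega

theorem hammingDist_eq_xL_add_xR (x y : Fin 6 → Fin 3) :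
    hammingDist x y = hammingDist (xL x) (xL y) + hammingDist (xR x) (xR y) := by
  have hR : ∀ z : Fin 6 → Fin 3, xR z = z ∘ Fin.natAdd 3 := fun z =>
    funext fun j => congrArg z (Fin.ext (Nat.add_comm _ _))
  rw [hR, hR]
  exact hammingDist_fin_add (m := 3) (n := 3) x y

section

variable (R S : (Fin 3 → Fin 3) → Equiv.Perm (Fin 5)) (x : Fin 6 → Fin 3)

theorem phi_injective : Injective (phi R x) := fun _ _ h =>
  (R (xL x)).injective (Fin.ext (Nat.add_right_cancel h))

theorem gam_injective : Injective (gam S x) := fun _ _ h =>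
  (S (xR x)).injective (Fin.ext (Nat.add_right_cancel (Nat.add_right_cancel h)))

theorem phi_le_five (i : Fin 5) : phi R x i ≤ 5 := (R (xL x) i).isLt

theorem four_le_gam (i : Fin 5) : 4 ≤ gam S x i := by
  unfold gam
  omega

theorem gam_le_eight (i : Fin 5) : gam S x i ≤ 8 := by
  have := (S (xR x) i).isLt
  unfold gam
  omega

theorem rho_castAdd (i : Fin 4) :
    rho R S x (Fin.castAdd 4 i) =
      if phi R x i.castSucc = 5 then gam S x 4 else phi R x i.castSucc := by
  simp only [rho, Fin.val_castAdd, Fin.is_lt, ↓reduceDIte]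
  rfl

theorem rho_natAdd (j : Fin 4) :
    rho R S x (Fin.natAdd 4 j) =
      if gam S x j.castSucc = 4 then phi R x 4 else gam S x j.castSucc := by
  simp only [rho, Fin.natAdd_eq_addNat, Fin.val_addNat, add_lt_iff_neg_right, not_lt_zero,
    ↓reduceDIte, add_tsub_cancel_right]
  rfl

variable {R S x}

theorem rho_castAdd_injective (hγ : gam S x 4 ≠ 4) :
    Injective fun i : Fin 4 => rho R S x (Fin.castAdd 4 i) := by
  have hinj := ((phi_injective R x).comp (Fin.castSucc_injective 4)).ite_replace
    (a := 5) (c := gam S x 4) fun i hi => by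
      have := phi_le_five R x i.castSucc
      have := four_le_gam S x 4
      dsimp only [comp_apply] at hi ⊢
      omega
  simpa only [rho_castAdd, comp_apply] using hinj

theorem rho_natAdd_injective (hφ : phi R x 4 ≠ 5) :
    Injective fun j : Fin 4 => rho R S x (Fin.natAdd 4 j) := by
  have hinj := ((gam_injective S x).comp (Fin.castSucc_injective 4)).ite_replace
    (a := 4) (c := phi R x 4) fun i hi => by
      have := phi_le_five R x 4
      have := four_le_gam S x i.castSucc
      dsimp only [comp_apply] at hi ⊢
      omega
  simpa only [rho_natAdd, comp_apply] using hinj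

theorem rho_castAdd_ne_rho_natAdd (hφ : phi R x 4 ≠ 5) (hγ : gam S x 4 ≠ 4) (i j : Fin 4) :
    rho R S x (Fin.castAdd 4 i) ≠ rho R S x (Fin.natAdd 4 j) := by
  have hi4 : i.castSucc ≠ 4 := (Fin.castSucc_lt_last i).ne
  have hj4 : j.castSucc ≠ 4 := (Fin.castSucc_lt_last j).ne
  have := phi_le_five R x i.castSucc
  have := phi_le_five R x 4
  have := four_le_gam S x j.castSucc
  have := four_le_gam S x 4
  rw [rho_castAdd, rho_natAdd]
  split_ifs with hφi hγj
  · omega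
  · exact fun h => hj4 (gam_injective S x h.symm)
  · exact fun h => hi4 (phi_injective R x h)
  · omega

theorem rho_injective (hφ : phi R x 4 ≠ 5) (hγ : gam S x 4 ≠ 4) : Injective (rho R S x) := by
  rw [← Fin.append_castAdd_natAdd (m := 4) (n := 4) (f := rho R S x)]
  exact Fin.append_injective_iff.mpr
    ⟨rho_castAdd_injective hγ, rho_natAdd_injective hφ, rho_castAdd_ne_rho_natAdd hφ hγ⟩

theorem rho_mem_Icc (i : Fin 8) : rho R S x i ∈ Icc 1 8 := by
  have hφ (k : Fin 5) : phi R x k ∈ Icc 1 8 :=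
    mem_Icc.2 ⟨Nat.succ_pos _, (phi_le_five R x k).trans (by norm_num)⟩
  have hγ (k : Fin 5) : gam S x k ∈ Icc 1 8 :=
    mem_Icc.2 ⟨(four_le_gam S x k).trans' (by norm_num), gam_le_eight S x k⟩
  unfold rho
  split_ifs <;> apply_assumption

theorem exists_Umap_eq_seven {i : Fin 5} (hi : (i : ℕ) < 3) (h : phi R x i = 1) :
    ∃ j : Fin 8, (j : ℕ) < 3 ∧ Umap R S x j = 7 := by
  refine ⟨Fin.castAdd 4 (i.castLT (by omega)), hi, ?_⟩
  rw [Umap, rho_castAdd, Fin.castSucc_castLT, h]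
  rfl

theorem exists_Umap_eq_eight {i : Fin 5} (hi : (i : ℕ) < 3) (h : gam S x i = 5) :
    ∃ j : Fin 8, 4 ≤ (j : ℕ) ∧ (j : ℕ) < 7 ∧ Umap R S x j = 8 := by
  refine ⟨Fin.natAdd 4 (i.castLT (n := 4) (by omega)), by simp, ?_, ?_⟩
  · simp only [Fin.val_natAdd, Fin.val_castLT]
    omega
  rw [Umap, rho_natAdd, Fin.castSucc_castLT, h]
  rfl

theorem Umap_castAdd_ne {y : Fin 6 → Fin 3} (hγx : gam S x 4 ≠ 4) (hγy : gam S y 4 ≠ 4)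
    {i : Fin 4} (h : R (xL x) i.castSucc ≠ R (xL y) i.castSucc) :
    Umap R S x (Fin.castAdd 4 i) ≠ Umap R S y (Fin.castAdd 4 i) := by
  have hne : phi R x i.castSucc ≠ phi R y i.castSucc := fun e =>
    h (Fin.ext (Nat.add_right_cancel e))
  have := phi_le_five R x i.castSucc
  have := phi_le_five R y i.castSucc
  have := four_le_gam S x 4
  have := four_le_gam S y 4
  rw [Umap, Umap, sw_involutive.injective.ne_iff, rho_castAdd, rho_castAdd]
  split_ifs <;> omega

theorem Umap_natAdd_ne {y : Fin 6 → Fin 3} (hφx : phi R x 4 ≠ 5) (hφy : phi R y 4 ≠ 5)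
    {j : Fin 4} (h : S (xR x) j.castSucc ≠ S (xR y) j.castSucc) :
    Umap R S x (Fin.natAdd 4 j) ≠ Umap R S y (Fin.natAdd 4 j) := by
  have hne : gam S x j.castSucc ≠ gam S y j.castSucc := fun e =>
    h (Fin.ext (Nat.add_right_cancel (Nat.add_right_cancel e)))
  have := four_le_gam S x j.castSucc
  have := four_le_gam S y j.castSucc
  have := phi_le_five R x 4
  have := phi_le_five R y 4
  rw [Umap, Umap, sw_involutive.injective.ne_iff, rho_natAdd, rho_natAdd]
  split_ifs <;> omega

theorem card_ne_add_card_ne_le_card_Umap_ne {y : Fin 6 → Fin 3}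
    (hφx : phi R x 4 ≠ 5) (hφy : phi R y 4 ≠ 5) (hγx : gam S x 4 ≠ 4) (hγy : gam S y 4 ≠ 4) :
    #{i : Fin 5 | (i : ℕ) < 3 ∧ R (xL x) i ≠ R (xL y) i} +
        #{i : Fin 5 | (i : ℕ) < 3 ∧ S (xR x) i ≠ S (xR y) i} ≤
      #{i : Fin 8 | (i : ℕ) ≠ 3 ∧ (i : ℕ) ≠ 7 ∧ Umap R S x i ≠ Umap R S y i} := by
  rw [Fin.card_filter_univ_add (m := 4) (n := 4)]
  refine add_le_add ?_ ?_ <;> rw [Fin.card_filter_univ_castSucc _ (by simp)] <;>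
    refine card_le_card (monotone_filter_right _ fun i _ ⟨hi, hne⟩ => ?_)
  · simp only [Fin.val_castSucc, Fin.val_castAdd] at hi ⊢
    exact ⟨by omega, by omega, Umap_castAdd_ne hγx hγy hne⟩
  · simp only [Fin.val_castSucc, Fin.val_natAdd] at hi ⊢
    exact ⟨by omega, by omega, Umap_natAdd_ne hφx hφy hne⟩

end

theorem stmt_11 (R S : (Fin 3 → Fin 3) → Equiv.Perm (Fin 5))
    (hR1 : ∀ x, ∃ i : Fin 5, (i : ℕ) < 3 ∧ ((R x i : Fin 5) : ℕ) + 1 = 1)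
    (hR2 : ∀ x, ((R x 4 : Fin 5) : ℕ) + 1 ≠ 5)
    (hR3 : ∀ x y : Fin 3 → Fin 3, x ≠ y →
      hammingDist x y ≤
        (Finset.univ.filter fun i : Fin 5 => (i : ℕ) < 3 ∧ R x i ≠ R y i).card)
    (hS1 : ∀ x, ∃ i : Fin 5, (i : ℕ) < 3 ∧ ((S x i : Fin 5) : ℕ) + 1 = 2)
    (hS2 : ∀ x, ((S x 4 : Fin 5) : ℕ) + 1 ≠ 1)
    (hS3 : ∀ x y : Fin 3 → Fin 3, x ≠ y →
      hammingDist x y ≤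
        (Finset.univ.filter fun i : Fin 5 => (i : ℕ) < 3 ∧ S x i ≠ S y i).card) :
    (∀ x : Fin 6 → Fin 3,
        (Function.Injective (Umap R S x) ∧ ∀ i, Umap R S x i ∈ Finset.Icc 1 8) ∧
        (∃ i : Fin 8, (i : ℕ) < 3 ∧ Umap R S x i = 7) ∧
        (∃ i : Fin 8, 4 ≤ (i : ℕ) ∧ (i : ℕ) < 7 ∧ Umap R S x i = 8)) ∧
      ∀ x y : Fin 6 → Fin 3, x ≠ y →
        hammingDist x y ≤
          (Finset.univ.filter fun i : Fin 8 =>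
            (i : ℕ) ≠ 3 ∧ (i : ℕ) ≠ 7 ∧ Umap R S x i ≠ Umap R S y i).card := by
  have hφ (x : Fin 6 → Fin 3) : phi R x 4 ≠ 5 := hR2 (xL x)
  have hγ (x : Fin 6 → Fin 3) : gam S x 4 ≠ 4 := by
    have := hS2 (xR x)
    unfold gam
    omega
  refine ⟨fun x => ⟨⟨sw_involutive.injective.comp (rho_injective (hφ x) (hγ x)),
    fun i => sw_mem_Icc (rho_mem_Icc i)⟩, ?_, ?_⟩, fun x y _ => ?_⟩
  · obtain ⟨i, hi, h1⟩ := hR1 (xL x)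
    exact exists_Umap_eq_seven hi h1
  · obtain ⟨i, hi, h2⟩ := hS1 (xR x)
    exact exists_Umap_eq_eight hi (by unfold gam; omega)
  · calc hammingDist x y = hammingDist (xL x) (xL y) + hammingDist (xR x) (xR y) :=
          hammingDist_eq_xL_add_xR x y
      _ ≤ _ := add_le_add (hammingDist_le_of_forall_ne hR3 _ _)
          (hammingDist_le_of_forall_ne hS3 _ _)
      _ ≤ _ := card_ne_add_card_ne_le_card_Umap_ne (hφ x) (hφ y) (hγ x) (hγ y)
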